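/- Let U ⊆ ℂ be open and let g, h : U → ℝ^N be smooth maps such that for all z ∈ U and v ∈ ℂ, Dh(z)(v) = −Dg(z)(i·v), and such that g is a conformal immersion: ⟨Dg(z)(1), Dg(z)(i)⟩ = 0 and ‖Dg(z)(1)‖ = ‖Dg(z)(i)‖ ≠ 0 for all z. Then at every point z with h(z) ≠ 0, the function r = ‖h‖ satisfies (∂r/∂x)² + (∂r/∂y)² ≤ ‖Dg(z)(1)‖², where ∂r/∂x = Dr(z)(1) and ∂r/∂y = Dr(z)(i); equivalently, the gradient of r with respect to the metric induced by g has norm at most 1. -/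

import Mathlib

open scoped RealInnerProductSpace

/-! The conjugacy relation turns the partial derivatives of `h` into `-Dg(z)(i)` and `Dg(z)(1)`,
so `∇r = (-⟪h, Dg(z)(i)⟫, ⟪h, Dg(z)(1)⟫) / ‖h‖`. Since `Dg(z)(1)` and `Dg(z)(i)` are
orthogonal of equal length, Bessel's inequality for them bounds `‖∇r‖²` by `‖Dg(z)(1)‖²`. -/

theorem fderiv_norm_apply_of_ne_zero {G F : Type*} [NormedAddCommGroup G] [NormedSpace ℝ G]
    [NormedAddCommGroup F] [InnerProductSpace ℝ F] {f : G → F} {x : G}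
    (hf : DifferentiableAt ℝ f x) (h0 : f x ≠ 0) (v : G) :
    fderiv ℝ (fun y => ‖f y‖) x v = ⟪f x, fderiv ℝ f x v⟫ / ‖f x‖ := by
  -- compare the chain rule for `‖f‖ ^ 2` with the derivative of the squared norm
  have hsq := ((hf.norm ℝ h0).hasFDerivAt.pow 2).unique hf.hasFDerivAt.norm_sq
  have hv := congrArg (fun L => L v) hsq
  simp only [Nat.add_one_sub_one, pow_one, nsmul_eq_mul, Nat.cast_ofNat, smul_apply, smul_eq_mul,
    ContinuousLinearMap.comp_apply, coe_innerSL_apply] at hv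
  have : ‖f x‖ ≠ 0 := norm_ne_zero_iff.mpr h0
  field_simp
  linarith

theorem inner_sq_add_inner_sq_le {E : Type*} [NormedAddCommGroup E] [InnerProductSpace ℝ E]
    (u : E) {a b : E} (hab : ⟪a, b⟫ = 0) (hn : ‖a‖ = ‖b‖) :
    ⟪u, a⟫ ^ 2 + ⟪u, b⟫ ^ 2 ≤ ‖u‖ ^ 2 * ‖a‖ ^ 2 := by
  set s := ⟪u, a⟫ ^ 2 + ⟪u, b⟫ ^ 2
  -- Cauchy–Schwarz against the projection `w` of `u` onto `span {a, b}`
  set w := ⟪u, a⟫ • a + ⟪u, b⟫ • b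
  have hinner : ⟪u, w⟫ = s := by
    simp only [w, s, inner_add_right, real_inner_smul_right]; ring
  have hnorm : ‖w‖ ^ 2 = s * ‖a‖ ^ 2 := by
    rw [norm_add_sq_real, norm_smul, norm_smul, real_inner_smul_left, real_inner_smul_right, hab,
      ← hn, Real.norm_eq_abs, Real.norm_eq_abs, mul_pow, mul_pow, sq_abs, sq_abs]
    ring
  have hcs : s * s ≤ ‖u‖ ^ 2 * ‖w‖ ^ 2 := by
    simpa only [hinner, real_inner_self_eq_norm_sq] using real_inner_mul_inner_self_le u w
  rw [hnorm] at hcs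
  rcases (by positivity : 0 ≤ s).eq_or_lt with hs | hs
  · rw [← hs]; positivity
  · nlinarith

theorem gradient_norm_le_one (N : ℕ) (U : Set ℂ)
    (g h : ℂ → EuclideanSpace ℝ (Fin N))
    (hh : ∀ z ∈ U, DifferentiableAt ℝ h z)
    (hconj : ∀ z ∈ U, ∀ v : ℂ, fderiv ℝ h z v = - fderiv ℝ g z (Complex.I * v))
    (hconf : ∀ z ∈ U,
      (⟪fderiv ℝ g z 1, fderiv ℝ g z Complex.I⟫ : ℝ) = 0 ∧
      ‖fderiv ℝ g z 1‖ = ‖fderiv ℝ g z Complex.I‖ ∧ ‖fderiv ℝ g z 1‖ ≠ 0) :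
    ∀ z ∈ U, h z ≠ 0 →
      (fderiv ℝ (fun w => ‖h w‖) z 1)^2 + (fderiv ℝ (fun w => ‖h w‖) z Complex.I)^2 ≤
        ‖fderiv ℝ g z 1‖^2 := by
  intro z hz h0
  obtain ⟨horth, hnorm, -⟩ := hconf z hz
  have hx : fderiv ℝ h z 1 = -fderiv ℝ g z Complex.I := by rw [hconj z hz, mul_one]
  have hy : fderiv ℝ h z Complex.I = fderiv ℝ g z 1 := by
    rw [hconj z hz, Complex.I_mul_I, map_neg, neg_neg]
  have hbessel := inner_sq_add_inner_sq_le (h z) horth hnorm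
  have hpos : 0 < ‖h z‖ := norm_pos_iff.mpr h0
  rw [fderiv_norm_apply_of_ne_zero (hh z hz) h0, fderiv_norm_apply_of_ne_zero (hh z hz) h0,
    hx, hy, inner_neg_right, div_pow, div_pow, neg_sq, ← add_div, add_comm,
    div_le_iff₀ (by positivity)]
  linarith
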